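/- Define Θ(x,y,a₂) = (1/5)(x−y)² − a₂ on {(x,y,a₂) ∈ ℝ³ : x > y}. Then: (i) 3 ∂²Θ/∂x² + (2/(y−x)) ∂Θ/∂y + 2 ∂Θ/∂a₂ = 0; (ii) −∂Θ/∂a₂ = 1; (iii) (∂/∂x + ∂/∂y)Θ = 0; and (iv) (x ∂/∂x + y ∂/∂y + 2a₂ ∂/∂a₂)Θ = 2Θ. That is, Θ is a local martingale function of SLE₆(ρ=0) with L₂Θ = 1, L₁Θ = 0 and L₀Θ = 2Θ. -/
import Mathlib


/-- The SLE₆(0) local martingale function `Θ(x,y,a₂) = (1/5)(x-y)² - a₂`. -/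
noncomputable def Θ12 (x y a₂ : ℝ) : ℝ := 1 / 5 * (x - y) ^ 2 - a₂

lemma Θ12_dx (y a₂ x : ℝ) :
    deriv (fun x' => Θ12 x' y a₂) x = 2 / 5 * (x - y) := by
  unfold Θ12
  have h : HasDerivAt (fun x' : ℝ => 1 / 5 * (x' - y) ^ 2 - a₂)
      (1 / 5 * ((2:ℕ) * (x - y) ^ (2-1) * 1)) x :=
    (((((hasDerivAt_id x).sub_const y).pow 2).const_mul (1/5:ℝ)).sub_const a₂)
  rw [h.deriv]; push_cast; ring

lemma Θ12_dy (x a₂ y : ℝ) :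
    deriv (fun y' => Θ12 x y' a₂) y = -(2 / 5) * (x - y) := by
  unfold Θ12
  have h : HasDerivAt (fun y' : ℝ => 1 / 5 * (x - y') ^ 2 - a₂)
      (1 / 5 * ((2:ℕ) * (x - y) ^ (2-1) * -1)) y :=
    (((((hasDerivAt_id y).const_sub x).pow 2).const_mul (1/5:ℝ)).sub_const a₂)
  rw [h.deriv]; push_cast; ring

lemma Θ12_da (x y a₂ : ℝ) :
    deriv (fun a₂' => Θ12 x y a₂') a₂ = -1 := by
  unfold Θ12
  rw [deriv_const_sub]
  simp

/-- `Θ` is a local martingale function of SLE₆(ρ=0) with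
`L₂ Θ = 1`, `L₁ Θ = 0` and `L₀ Θ = 2Θ`. -/
theorem stmt_12 :
    ∀ x y a₂ : ℝ, y < x →
      (3 * deriv (fun x' => deriv (fun x'' => Θ12 x'' y a₂) x') x
          + 2 / (y - x) * deriv (fun y' => Θ12 x y' a₂) y
          + 2 * deriv (fun a₂' => Θ12 x y a₂') a₂ = 0)
      ∧ (-deriv (fun a₂' => Θ12 x y a₂') a₂ = 1)
      ∧ (deriv (fun x' => Θ12 x' y a₂) x + deriv (fun y' => Θ12 x y' a₂) y = 0)
      ∧ (x * deriv (fun x' => Θ12 x' y a₂) x + y * deriv (fun y' => Θ12 x y' a₂) y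
          + 2 * a₂ * deriv (fun a₂' => Θ12 x y a₂') a₂ = 2 * Θ12 x y a₂) := by
  intro x y a₂ hyx
  have hxx : deriv (fun x' => deriv (fun x'' => Θ12 x'' y a₂) x') x = 2 / 5 := by
    have : (fun x' => deriv (fun x'' => Θ12 x'' y a₂) x') =
        (fun x' => 2 / 5 * (x' - y)) := funext fun x' => Θ12_dx y a₂ x'
    rw [this]
    have h : HasDerivAt (fun x' : ℝ => 2 / 5 * (x' - y)) (2 / 5 * 1) x :=
      ((hasDerivAt_id x).sub_const y).const_mul (2/5:ℝ)
    rw [h.deriv]; ring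
  have hne : y - x ≠ 0 := sub_ne_zero.mpr (ne_of_lt hyx)
  refine ⟨?_, ?_, ?_, ?_⟩
  · rw [hxx, Θ12_dy, Θ12_da]
    field_simp
    ring
  · rw [Θ12_da]; ring
  · rw [Θ12_dx, Θ12_dy]; ring
  · rw [Θ12_dx, Θ12_dy, Θ12_da]
    unfold Θ12
    ring
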